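/- arXiv:2604.02462 — 3 statements merged into one kernel-verified Lean document; each statement's English description precedes it below -/
import Mathlib

section
/- Let D be the open unit disc in ℂ, let b ∈ D, and let N be a nonnegative integer. Then for every holomorphic h on D with ∫_D |h|² dA < ∞, |h(b) − Σ_{n=0}^N (b^n/n!) h^{(n)}(0)| ≤ (∫_D |h(z)|² dA(z))^{1/2} · (∫_D |E_N(z \bar{b})|² dA(z))^{1/2}, where E_N(w) = π^{−1}((N+2) w^{N+1} − (N+1) w^{N+2}) / (1−w)². -/
open MeasureTheory Metric Complex Set ComplexConjugate Filter Topology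
open scoped NNReal

/-!
Write `aₙ = h⁽ⁿ⁾(0)/n!`. Expanding `h` in its Taylor series on discs of radius `r < 1`, where the
monomials `zᵏ z̄ᵐ` are orthogonal (polar coordinates), and letting `r → 1` gives the moment formula
`∫_D h(z) z̄ᵐ dA = π aₘ / (m + 1)`. Since `π E_N(w) = ∑_{n > N} (n + 1) wⁿ`,
integrating `h` against `conj (E_N(z b̄))` term by term yields exactly the Taylor remainder
`∑_{n > N} aₙ bⁿ = h(b) - ∑_{n ≤ N} aₙ bⁿ`, and Cauchy–Schwarz in `L²(D)` gives the bound.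
-/

lemma hasSum_integral_of_norm_le_mul {α E : Type*} [MeasurableSpace α] {μ : Measure α}
    [NormedAddCommGroup E] [NormedSpace ℝ E] {F : ℕ → α → E} {f : α → E} {c : ℕ → ℝ}
    {g : α → ℝ} (hF : ∀ n, AEStronglyMeasurable (F n) μ) (hle : ∀ n, ∀ᵐ a ∂μ, ‖F n a‖ ≤ c n * g a)
    (hc : Summable c) (hg : Integrable g μ) (hlim : ∀ᵐ a ∂μ, HasSum (fun n => F n a) (f a)) :
    HasSum (fun n => ∫ a, F n a ∂μ) (∫ a, f a ∂μ) :=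
  hasSum_integral_of_dominated_convergence (fun n a => c n * g a) hF hle
    (.of_forall fun _ => hc.mul_right _) (by simpa only [tsum_mul_right] using hg.const_mul _) hlim

lemma norm_integral_mul_conj_le {α : Type*} [MeasurableSpace α] {μ : Measure α} {f g : α → ℂ}
    (hf : MemLp f 2 μ) (hg : MemLp g 2 μ) :
    ‖∫ a, f a * conj (g a) ∂μ‖ ≤ √(∫ a, ‖f a‖ ^ 2 ∂μ) * √(∫ a, ‖g a‖ ^ 2 ∂μ) := calc
  ‖∫ a, f a * conj (g a) ∂μ‖ ≤ ∫ a, ‖f a‖ * ‖g a‖ ∂μ := by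
    refine (norm_integral_le_integral_norm _).trans_eq ?_
    simp only [norm_mul, RCLike.norm_conj]
  _ ≤ (∫ a, ‖f a‖ ^ (2 : ℝ) ∂μ) ^ (1 / (2 : ℝ)) * (∫ a, ‖g a‖ ^ (2 : ℝ) ∂μ) ^ (1 / (2 : ℝ)) :=
    integral_mul_norm_le_Lp_mul_Lq .two_two (by simpa using hf) (by simpa using hg)
  _ = √(∫ a, ‖f a‖ ^ 2 ∂μ) * √(∫ a, ‖g a‖ ^ 2 ∂μ) := by
    simp only [Real.rpow_two, Real.sqrt_eq_rpow]

instance isFiniteMeasure_restrict_ball {X : Type*} [PseudoMetricSpace X] [ProperSpace X]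
    [MeasurableSpace X] {μ : Measure X} [IsFiniteMeasureOnCompacts μ] (x : X) (r : ℝ) :
    IsFiniteMeasure (μ.restrict (ball x r)) :=
  isFiniteMeasure_restrict.mpr measure_ball_lt_top.ne

lemma setIntegral_ball_eq_setIntegral_polarCoord {E : Type*} [NormedAddCommGroup E]
    [NormedSpace ℝ E] (f : ℂ → E) (r : ℝ) :
    ∫ z in ball (0 : ℂ) r, f z =
      ∫ p in Ioo 0 r ×ˢ Ioo (-Real.pi) Real.pi, p.1 • f (Complex.polarCoord.symm p) := by
  have hS : MeasurableSet (Ioo 0 r ×ˢ Ioo (-Real.pi) Real.pi) :=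
    measurableSet_Ioo.prod measurableSet_Ioo
  have hsub : Ioo 0 r ×ˢ Ioo (-Real.pi) Real.pi ⊆ polarCoord.target := by
    rw [polarCoord_target]
    exact prod_mono Ioo_subset_Ioi_self subset_rfl
  rw [← integral_indicator measurableSet_ball, ← Complex.integral_comp_polarCoord_symm,
    ← Set.inter_eq_right.mpr hsub, ← setIntegral_indicator hS]
  refine setIntegral_congr_fun polarCoord.open_target.measurableSet fun p hp => ?_
  have hmem : Complex.polarCoord.symm p ∈ ball (0 : ℂ) r ↔
      p ∈ Ioo 0 r ×ˢ Ioo (-Real.pi) Real.pi := by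
    rw [polarCoord_target, mem_prod, mem_Ioi] at hp
    rw [mem_ball_zero_iff, Complex.norm_polarCoord_symm, abs_of_pos hp.1, mem_prod, mem_Ioo]
    tauto
  by_cases hp' : p ∈ Ioo 0 r ×ˢ Ioo (-Real.pi) Real.pi
  · rw [indicator_of_mem (hmem.mpr hp'), indicator_of_mem hp']
  · rw [indicator_of_notMem (mt hmem.mp hp'), indicator_of_notMem hp', smul_zero]

lemma integral_Ioo_pow {r : ℝ} (hr : 0 ≤ r) (n : ℕ) :
    ∫ s in Ioo 0 r, s ^ n = r ^ (n + 1) / (n + 1) := by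
  rw [← integral_Ioc_eq_integral_Ioo, ← intervalIntegral.integral_of_le hr, integral_pow]
  simp

lemma integral_exp_intCast_mul_I (n : ℤ) :
    ∫ θ in Ioo (-Real.pi) Real.pi, exp (n * θ * I) = if n = 0 then 2 * (Real.pi : ℂ) else 0 := by
  rw [← integral_Ioc_eq_integral_Ioo, ← intervalIntegral.integral_of_le (by linarith [Real.pi_pos])]
  split_ifs with hn
  · simp [hn, two_mul]
  · have hc : (n : ℂ) * I ≠ 0 := mul_ne_zero (Int.cast_ne_zero.mpr hn) I_ne_zero
    have hperiodic : exp (n * I * Real.pi) = exp (n * I * (-Real.pi : ℝ)) := by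
      rw [show (n : ℂ) * I * Real.pi = n * I * (-Real.pi : ℝ) + n * (2 * Real.pi * I) by
        push_cast; ring, exp_add, exp_int_mul_two_pi_mul_I, mul_one]
    simp_rw [mul_right_comm _ _ I]
    rw [integral_exp_mul_complex hc, hperiodic, sub_self, zero_div]

lemma polarCoord_symm_pow_mul_conj_pow (p : ℝ × ℝ) (k m : ℕ) :
    Complex.polarCoord.symm p ^ k * conj (Complex.polarCoord.symm p) ^ m =
      (p.1 ^ (k + m) : ℝ) * exp (((k : ℤ) - m : ℤ) * p.2 * I) := by
  have hz : Complex.polarCoord.symm p = p.1 * exp (p.2 * I) := by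
    rw [Complex.polarCoord_symm_apply, exp_mul_I]; push_cast; ring
  rw [hz, map_mul, conj_ofReal, ← exp_conj, map_mul, conj_ofReal, conj_I, mul_pow, mul_pow,
    ← exp_nat_mul, ← exp_nat_mul, mul_mul_mul_comm, ← exp_add]
  push_cast
  ring_nf

lemma integral_ball_pow_mul_conj_pow {r : ℝ} (hr : 0 ≤ r) (k m : ℕ) :
    ∫ z in ball (0 : ℂ) r, z ^ k * conj z ^ m =
      if k = m then (Real.pi : ℂ) * r ^ (2 * m + 2) / (m + 1) else 0 := by
  have hpolar : ∀ p : ℝ × ℝ,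
      p.1 • (Complex.polarCoord.symm p ^ k * conj (Complex.polarCoord.symm p) ^ m) =
        ((p.1 ^ (k + m + 1) : ℝ) : ℂ) * exp (((k : ℤ) - m : ℤ) * p.2 * I) := fun p => by
    rw [polarCoord_symm_pow_mul_conj_pow, real_smul, ← mul_assoc, ← ofReal_mul, ← pow_succ']
  simp_rw [setIntegral_ball_eq_setIntegral_polarCoord, hpolar]
  rw [Measure.volume_eq_prod, setIntegral_prod_mul (fun s : ℝ => ((s ^ (k + m + 1) : ℝ) : ℂ))
    (fun θ : ℝ => exp (((k : ℤ) - m : ℤ) * θ * I))]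
  rw [integral_complex_ofReal, integral_Ioo_pow hr, integral_exp_intCast_mul_I]
  simp only [sub_eq_zero, Nat.cast_inj]
  split_ifs with hkm
  · subst hkm
    have hk : (k : ℂ) + 1 ≠ 0 := Nat.cast_add_one_ne_zero k
    push_cast
    rw [show (k : ℂ) + k + 1 + 1 = 2 * (k + 1) by ring]
    field_simp
    ring
  · rw [mul_zero]

lemma summable_norm_mul_pow_of_summable_mul_pow {𝕜 : Type*} [NontriviallyNormedField 𝕜]
    {a : ℕ → 𝕜} {z : 𝕜} (ha : Summable fun n => a n * z ^ n) {r : ℝ≥0} (hr : (r : ℝ) < ‖z‖) :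
    Summable fun n => ‖a n‖ * (r : ℝ) ^ n := by
  have hlim : Tendsto (fun n => ‖FormalMultilinearSeries.ofScalars 𝕜 a n‖ * (‖z‖₊ : ℝ) ^ n)
      atTop (𝓝 0) := by
    simpa [FormalMultilinearSeries.ofScalars_norm] using ha.tendsto_atTop_zero.norm
  simpa [FormalMultilinearSeries.ofScalars_norm] using
    (FormalMultilinearSeries.ofScalars 𝕜 a).summable_norm_mul_pow
      ((ENNReal.coe_lt_coe.mpr (show r < ‖z‖₊ from hr)).trans_le
        ((FormalMultilinearSeries.ofScalars 𝕜 a).le_radius_of_tendsto hlim))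

noncomputable def taylorCoeff (h : ℂ → ℂ) (n : ℕ) : ℂ := (n.factorial : ℂ)⁻¹ * iteratedDeriv n h 0

lemma hasSum_taylorCoeff_mul_pow {h : ℂ → ℂ} {R : ℝ} (hh : DifferentiableOn ℂ h (ball 0 R))
    {z : ℂ} (hz : z ∈ ball (0 : ℂ) R) :
    HasSum (fun n => taylorCoeff h n * z ^ n) (h z) := by
  refine (Complex.hasSum_taylorSeries_on_ball hh hz).congr_fun fun n => ?_
  simp only [taylorCoeff, sub_zero, smul_eq_mul]
  ring

lemma summable_norm_taylorCoeff_mul_pow {h : ℂ → ℂ} {R r : ℝ}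
    (hh : DifferentiableOn ℂ h (ball 0 R)) (hr0 : 0 ≤ r) (hr : r < R) :
    Summable fun n => ‖taylorCoeff h n‖ * r ^ n := by
  obtain ⟨ρ, hrρ, hρR⟩ := exists_between hr
  have hρ : ((ρ : ℝ) : ℂ) ∈ ball (0 : ℂ) R := by
    rwa [mem_ball_zero_iff, norm_real, Real.norm_of_nonneg (hr0.trans hrρ.le)]
  lift r to ℝ≥0 using hr0
  refine summable_norm_mul_pow_of_summable_mul_pow (hasSum_taylorCoeff_mul_pow hh hρ).summable ?_
  rwa [norm_real, Real.norm_of_nonneg (r.2.trans hrρ.le)]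

lemma integral_ball_mul_conj_pow_of_lt {h : ℂ → ℂ} {R r : ℝ}
    (hh : DifferentiableOn ℂ h (ball 0 R)) (hr0 : 0 ≤ r) (hr : r < R) (m : ℕ) :
    ∫ z in ball (0 : ℂ) r, h z * conj z ^ m =
      Real.pi * r ^ (2 * m + 2) / (m + 1) * taylorCoeff h m := by
  have hsub : ball (0 : ℂ) r ⊆ ball 0 R := ball_subset_ball hr.le
  have hnorm : ∀ᵐ z ∂(volume.restrict (ball (0 : ℂ) r)), ‖z‖ ≤ r := by
    filter_upwards [ae_restrict_mem measurableSet_ball] with z hz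
    exact (mem_ball_zero_iff.mp hz).le
  have hsum := hasSum_integral_of_norm_le_mul
    (F := fun k z => taylorCoeff h k * (z ^ k * conj z ^ m))
    (c := fun k => ‖taylorCoeff h k‖ * r ^ k * r ^ m) (g := 1)
    (μ := volume.restrict (ball 0 r))
    (fun k => by fun_prop)
    (fun k => by
      filter_upwards [hnorm] with z hz
      simp only [norm_mul, norm_pow, RCLike.norm_conj, Pi.one_apply, mul_one, ← mul_assoc]
      gcongr)
    ((summable_norm_taylorCoeff_mul_pow hh hr0 hr).mul_right _) (integrable_const 1)
    (by
      filter_upwards [ae_restrict_mem measurableSet_ball] with z hz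
      simpa only [mul_assoc] using (hasSum_taylorCoeff_mul_pow hh (hsub hz)).mul_right (conj z ^ m))
  simp only [integral_const_mul, integral_ball_pow_mul_conj_pow hr0] at hsum
  rw [← hsum.tsum_eq, tsum_eq_single m fun k hk => by simp [hk], if_pos rfl, mul_comm]

lemma integral_ball_mul_conj_pow {h : ℂ → ℂ} {R : ℝ} (hR : 0 < R)
    (hh : DifferentiableOn ℂ h (ball 0 R)) (hint : IntegrableOn h (ball 0 R)) (m : ℕ) :
    ∫ z in ball (0 : ℂ) R, h z * conj z ^ m =
      Real.pi * R ^ (2 * m + 2) / (m + 1) * taylorCoeff h m := by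
  set r : ℕ → ℝ := fun n => R * (1 - 1 / (n + 1))
  have hr0 : ∀ n, 0 ≤ r n := fun n =>
    mul_nonneg hR.le (sub_nonneg.2 (div_le_one_of_le₀ (by simp) (by positivity)))
  have hrR : ∀ n, r n < R := fun n =>
    mul_lt_of_lt_one_right hR (sub_lt_self _ (by positivity))
  have hmono : Monotone fun n => ball (0 : ℂ) (r n) := fun i j hij => by
    refine ball_subset_ball ?_
    dsimp only [r]
    gcongr
  have hlim : Tendsto r atTop (𝓝 R) := by
    have := (tendsto_one_div_add_atTop_nhds_zero_nat.const_sub 1).const_mul R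
    rwa [sub_zero, mul_one] at this
  have hunion : ⋃ n, ball (0 : ℂ) (r n) = ball 0 R := by
    refine (iUnion_subset fun n => ball_subset_ball (hrR n).le).antisymm fun z hz => ?_
    obtain ⟨n, hn⟩ := (hlim.eventually (lt_mem_nhds (mem_ball_zero_iff.mp hz))).exists
    exact mem_iUnion.mpr ⟨n, mem_ball_zero_iff.mpr hn⟩
  have hmul : IntegrableOn (fun z => h z * conj z ^ m) (ball 0 R) :=
    hint.mul_continuousOn_of_subset (by fun_prop) measurableSet_ball (isCompact_closedBall 0 R)
      ball_subset_closedBall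
  refine tendsto_nhds_unique (f := fun n => ∫ z in ball (0 : ℂ) (r n), h z * conj z ^ m)
    (l := atTop) ?_ ?_
  · simpa only [hunion] using
      tendsto_setIntegral_of_monotone (fun _ => measurableSet_ball) hmono (hunion ▸ hmul)
  · simp_rw [integral_ball_mul_conj_pow_of_lt hh (hr0 _) (hrR _)]
    exact ((((continuous_ofReal.tendsto R).comp hlim).pow _).const_mul _ |>.div_const _).mul_const _

lemma hasSum_tail_succ_mul_geometric {𝕜 : Type*} [NormedField 𝕜] [CompleteSpace 𝕜] {w : 𝕜}
    (hw : ‖w‖ < 1) (N : ℕ) :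
    HasSum (fun j : ℕ => ((j : 𝕜) + N + 2) * w ^ (j + N + 1))
      ((((N : 𝕜) + 2) * w ^ (N + 1) - ((N : 𝕜) + 1) * w ^ (N + 2)) / (1 - w) ^ 2) := by
  have hw1 : 1 - w ≠ 0 := sub_ne_zero.mpr fun h => by simp [← h] at hw
  have hsum := ((hasSum_coe_mul_geometric_of_norm_lt_one hw).add
    ((hasSum_geometric_of_norm_lt_one hw).mul_left ((N : 𝕜) + 2))).mul_left (w ^ (N + 1))
  have hval : (((N : 𝕜) + 2) * w ^ (N + 1) - ((N : 𝕜) + 1) * w ^ (N + 2)) / (1 - w) ^ 2 =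
      w ^ (N + 1) * (w / (1 - w) ^ 2 + ((N : 𝕜) + 2) * (1 - w)⁻¹) := by
    field_simp
    ring
  rw [hval]
  exact hsum.congr_fun fun j => by ring

/-- `E_N(w) = π⁻¹ ∑_{n > N} (n + 1) wⁿ`: the error of the degree-`N` Taylor polynomial of the
Bergman kernel `π⁻¹ (1 - w)⁻²` of the unit disc, evaluated at `w = z b̄`. -/
noncomputable def bergmanTaylorError (N : ℕ) (w : ℂ) : ℂ :=
  (Real.pi : ℂ)⁻¹ *
    ((((N : ℂ) + 2) * w ^ (N + 1) - ((N : ℂ) + 1) * w ^ (N + 2)) / (1 - w) ^ 2)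

lemma hasSum_bergmanTaylorError {w : ℂ} (hw : ‖w‖ < 1) (N : ℕ) :
    HasSum (fun j : ℕ => (Real.pi : ℂ)⁻¹ * (((j : ℂ) + N + 2) * w ^ (j + N + 1)))
      (bergmanTaylorError N w) :=
  (hasSum_tail_succ_mul_geometric hw N).mul_left _

lemma norm_bergmanTaylorError_term_le {w : ℂ} {r : ℝ} (hwr : ‖w‖ ≤ r) (j N : ℕ) :
    ‖(Real.pi : ℂ)⁻¹ * (((j : ℂ) + N + 2) * w ^ (j + N + 1))‖ ≤
      Real.pi⁻¹ * (((j : ℝ) + N + 2) * r ^ (j + N + 1)) := by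
  have hnat : ((j : ℂ) + N + 2) = ((j + N + 2 : ℕ) : ℂ) := by push_cast; ring
  rw [hnat, norm_mul, norm_mul, norm_inv, norm_real, Real.norm_of_nonneg Real.pi_pos.le,
    norm_natCast, norm_pow]
  push_cast
  gcongr

lemma norm_bergmanTaylorError_le {w : ℂ} {r : ℝ} (hwr : ‖w‖ ≤ r) (hr : r < 1) (N : ℕ) :
    ‖bergmanTaylorError N w‖ ≤
      Real.pi⁻¹ * ((((N : ℝ) + 2) * r ^ (N + 1) - ((N : ℝ) + 1) * r ^ (N + 2)) / (1 - r) ^ 2) := by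
  have hr' : ‖r‖ < 1 := by rwa [Real.norm_of_nonneg ((norm_nonneg w).trans hwr)]
  exact (hasSum_bergmanTaylorError (hwr.trans_lt hr) N).norm_le_of_bounded
    ((hasSum_tail_succ_mul_geometric hr' N).mul_left _)
    fun j => norm_bergmanTaylorError_term_le hwr j N

lemma memLp_bergmanTaylorError (N : ℕ) {b : ℂ} (hb : ‖b‖ < 1) :
    MemLp (fun z => bergmanTaylorError N (z * conj b)) 2 (volume.restrict (ball 0 1)) := by
  have hmeas : Measurable fun z => bergmanTaylorError N (z * conj b) := by
    unfold bergmanTaylorError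
    fun_prop
  refine MemLp.of_bound hmeas.aestronglyMeasurable
    (Real.pi⁻¹ * ((((N : ℝ) + 2) * ‖b‖ ^ (N + 1) - ((N : ℝ) + 1) * ‖b‖ ^ (N + 2)) /
      (1 - ‖b‖) ^ 2)) ?_
  filter_upwards [ae_restrict_mem measurableSet_ball] with z hz
  refine norm_bergmanTaylorError_le ?_ hb N
  rw [norm_mul, RCLike.norm_conj]
  exact mul_le_of_le_one_left (norm_nonneg b) (mem_ball_zero_iff.mp hz).le

lemma integral_mul_conj_bergmanTaylorError {h : ℂ → ℂ} (hh : DifferentiableOn ℂ h (ball 0 1))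
    (hint : IntegrableOn h (ball 0 1)) {b : ℂ} (hb : b ∈ ball (0 : ℂ) 1) (N : ℕ) :
    ∫ z in ball (0 : ℂ) 1, h z * conj (bergmanTaylorError N (z * conj b)) =
      h b - ∑ n ∈ Finset.range (N + 1), taylorCoeff h n * b ^ n := by
  set F : ℕ → ℂ → ℂ := fun j z =>
    h z * conj ((Real.pi : ℂ)⁻¹ * (((j : ℂ) + N + 2) * (z * conj b) ^ (j + N + 1)))
  have hb' : ‖b‖ < 1 := mem_ball_zero_iff.mp hb
  have hw : ∀ z ∈ ball (0 : ℂ) 1, ‖z * conj b‖ ≤ ‖b‖ := fun z hz => by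
    rw [norm_mul, RCLike.norm_conj]
    exact mul_le_of_le_one_left (norm_nonneg b) (mem_ball_zero_iff.mp hz).le
  have hmeas : ∀ j, AEStronglyMeasurable (F j) (volume.restrict (ball 0 1)) := fun j =>
    (hh.continuousOn.aestronglyMeasurable measurableSet_ball).mul (by fun_prop)
  have hle : ∀ j, ∀ᵐ z ∂(volume.restrict (ball (0 : ℂ) 1)),
      ‖F j z‖ ≤ Real.pi⁻¹ * (((j : ℝ) + N + 2) * ‖b‖ ^ (j + N + 1)) * ‖h z‖ := fun j => by
    filter_upwards [ae_restrict_mem measurableSet_ball] with z hz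
    rw [norm_mul, RCLike.norm_conj, mul_comm]
    exact mul_le_mul_of_nonneg_right (norm_bergmanTaylorError_term_le (hw z hz) j N)
      (norm_nonneg _)
  have hlim : ∀ᵐ z ∂(volume.restrict (ball (0 : ℂ) 1)),
      HasSum (fun j => F j z) (h z * conj (bergmanTaylorError N (z * conj b))) := by
    filter_upwards [ae_restrict_mem measurableSet_ball] with z hz
    exact (hasSum_conj'.mpr
      (hasSum_bergmanTaylorError ((hw z hz).trans_lt hb') N)).mul_left (h z)
  have hc : Summable fun j : ℕ => Real.pi⁻¹ * (((j : ℝ) + N + 2) * ‖b‖ ^ (j + N + 1)) :=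
    (hasSum_tail_succ_mul_geometric (w := ‖b‖) (by rwa [norm_norm]) N).summable.mul_left _
  have hsum := hasSum_integral_of_norm_le_mul hmeas hle hc hint.norm hlim
  have hterm : ∀ j : ℕ, ∫ z in ball (0 : ℂ) 1, F j z =
        taylorCoeff h (j + (N + 1)) * b ^ (j + (N + 1)) := fun j => by
    have hF : F j = fun z => ((Real.pi : ℂ)⁻¹ * ((j : ℂ) + N + 2) * b ^ (j + N + 1)) *
        (h z * conj z ^ (j + N + 1)) := by
      funext z
      simp only [F, map_mul, map_inv₀, conj_ofReal, map_add, map_natCast, map_ofNat, map_pow,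
        conj_conj]
      ring
    have hπ : (Real.pi : ℂ) ≠ 0 := ofReal_ne_zero.mpr Real.pi_ne_zero
    have hj : (j : ℂ) + N + 2 ≠ 0 := by exact_mod_cast (j + N).succ_ne_zero
    rw [hF, integral_const_mul, integral_ball_mul_conj_pow one_pos hh hint, ofReal_one, one_pow,
      mul_one, ← add_assoc,
      show ((j + N + 1 : ℕ) : ℂ) + 1 = (j : ℂ) + N + 2 by push_cast; ring]
    field_simp
  simp_rw [hterm] at hsum
  exact hsum.unique ((hasSum_nat_add_iff' (N + 1)).mpr (hasSum_taylorCoeff_mul_pow hh hb))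

/-- Explicit approximate null quadrature identity on the unit disc: for `b ∈ D`
and `N ≥ 0`, every holomorphic square-integrable `h` on `D` satisfies
`|h(b) − Σ_{n=0}^N (bⁿ/n!) h^{(n)}(0)| ≤ ‖h‖_{L²(D)} · ‖E_N(z b̄)‖_{L²(D)}`,
where `E_N(w) = π⁻¹((N+2)w^{N+1} − (N+1)w^{N+2})/(1−w)²`. -/
theorem unit_disc_approximate_quadrature
    (b : ℂ) (hb : b ∈ Metric.ball (0 : ℂ) 1) (N : ℕ)
    (h : ℂ → ℂ) (hhol : DifferentiableOn ℂ h (Metric.ball (0 : ℂ) 1))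
    (hL2 : IntegrableOn (fun z => ‖h z‖ ^ 2) (Metric.ball (0 : ℂ) 1) volume) :
    ‖h b - ∑ n ∈ Finset.range (N + 1),
        (b ^ n / (n.factorial : ℂ)) * iteratedDeriv n h 0‖
      ≤ Real.sqrt (∫ z in Metric.ball (0 : ℂ) 1, ‖h z‖ ^ 2) *
        Real.sqrt (∫ z in Metric.ball (0 : ℂ) 1,
          ‖(Real.pi : ℂ)⁻¹ *
            ((((N : ℂ) + 2) * (z * (starRingEnd ℂ) b) ^ (N + 1)
              - ((N : ℂ) + 1) * (z * (starRingEnd ℂ) b) ^ (N + 2))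
            / (1 - z * (starRingEnd ℂ) b) ^ 2)‖ ^ 2) := by
  have hh2 : MemLp h 2 (volume.restrict (ball 0 1)) :=
    (memLp_two_iff_integrable_sq_norm
      (hhol.continuousOn.aestronglyMeasurable measurableSet_ball)).mpr hL2
  have htaylor : ∑ n ∈ Finset.range (N + 1), b ^ n / (n.factorial : ℂ) * iteratedDeriv n h 0 =
      ∑ n ∈ Finset.range (N + 1), taylorCoeff h n * b ^ n :=
    Finset.sum_congr rfl fun n _ => by rw [taylorCoeff]; ring
  rw [htaylor, ← integral_mul_conj_bergmanTaylorError hhol (hh2.integrable one_le_two) hb N]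
  exact norm_integral_mul_conj_le hh2 (memLp_bergmanTaylorError N (mem_ball_zero_iff.mp hb))
end

section
/- Let a, b be distinct points of ℂ, let γ : [0,1] → ℂ be a continuous curve with γ(0) = b and γ(1) = a, and let δ > 0. Then for every ε > 0 there exist a positive integer N and complex constants A_1, …, A_N such that for every z ∈ ℂ whose distance to the image γ([0,1]) is at least 2δ, |1/(z−b) − Σ_{j=1}^N A_j / (z−a)^j| < ε. (Runge's pole-pushing approximation of 1/(z−b) by a polynomial in 1/(z−a) on the set of points at distance greater than 2δ from the curve.) -/
/-
Pushing a pole: if `(z - c)⁻¹` is a uniform limit of polynomials without constant term in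
`(z - a)⁻¹` on a set staying at distance `≥ r` from `c`, and `|c' - c| < r`, then so is
`(z - c')⁻¹ = (z - c)⁻¹ ∑ₙ ((c' - c)(z - c)⁻¹)ⁿ`, the geometric series converging uniformly.
The set of poles reachable this way is open and closed along the curve, so by connectedness of
`[0, 1]` the pole can be moved from `a = γ 1` to `b = γ 0`.
-/

open Finset Polynomial BoundedContinuousFunction

theorem mul_tsum_geometric_mem_of_isClosed {𝔄 S : Type*} [NormedRing 𝔄]
    [HasSummableGeomSeries 𝔄] [SetLike S 𝔄] [NonUnitalSubsemiringClass S 𝔄] {s : S}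
    (hs : IsClosed (s : Set 𝔄)) {x y : 𝔄} (hx : x ∈ s) (hy : y ∈ s) (hy1 : ‖y‖ < 1) :
    x * ∑' n, y ^ n ∈ s := by
  have hterm : ∀ n, x * y ^ n ∈ s := by
    intro n
    induction n with
    | zero => simpa using hx
    | succ n ih => simpa only [pow_succ, ← mul_assoc] using mul_mem ih hy
  have hsum := ((summable_geometric_of_norm_lt_one hy1).mul_left x).hasSum
  rw [(summable_geometric_of_norm_lt_one hy1).tsum_mul_left] at hsum
  exact hs.mem_of_tendsto hsum <| .of_forall fun _ => sum_mem fun n _ => hterm n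

section

variable {α : Type*} [TopologicalSpace α]

/-- `g * (ι - c) = 1` says at once that `ι` avoids `c` and that `g = (ι - c)⁻¹`. -/
def InvSubMem (S : NonUnitalSubalgebra ℂ (α →ᵇ ℂ)) (ι : α → ℂ) (c : ℂ) : Prop :=
  ∃ g ∈ S, ∀ x, g x * (ι x - c) = 1

theorem exists_boundedContinuous_mul_sub_eq_one {ι : α → ℂ} (hι : Continuous ι) {c : ℂ} {r : ℝ}
    (hr : 0 < r) (hc : ∀ x, r ≤ ‖ι x - c‖) : ∃ g : α →ᵇ ℂ, ∀ x, g x * (ι x - c) = 1 := by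
  have hne : ∀ x, ι x - c ≠ 0 := fun x h => by simpa [h, hr.not_ge] using hc x
  refine ⟨.ofNormedAddCommGroup (fun x => (ι x - c)⁻¹) ((hι.sub continuous_const).inv₀ hne) r⁻¹
    fun x => ?_, fun x => inv_mul_cancel₀ (hne x)⟩
  rw [norm_inv]
  exact inv_anti₀ hr (hc x)

theorem InvSubMem.of_norm_sub_lt {S : NonUnitalSubalgebra ℂ (α →ᵇ ℂ)}
    (hS : IsClosed (S : Set (α →ᵇ ℂ))) {ι : α → ℂ} {c c' : ℂ} {r : ℝ} (hr : 0 < r)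
    (hc : ∀ x, r ≤ ‖ι x - c‖) (hcc' : ‖c' - c‖ < r) (h : InvSubMem S ι c) :
    InvSubMem S ι c' := by
  obtain ⟨g, hgS, hg⟩ := h
  have hg_norm : ‖g‖ ≤ r⁻¹ := by
    refine (BoundedContinuousFunction.norm_le (by positivity)).2 fun x => ?_
    rw [eq_inv_of_mul_eq_one_left (hg x), norm_inv]
    exact inv_anti₀ hr (hc x)
  set y := (c' - c) • g
  have hy : ‖y‖ < 1 := calc
    ‖y‖ ≤ ‖c' - c‖ * r⁻¹ := (norm_smul_le _ _).trans (by gcongr)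
    _ < r * r⁻¹ := by gcongr
    _ = 1 := mul_inv_cancel₀ hr.ne'
  refine ⟨g * ∑' n, y ^ n,
    mul_tsum_geometric_mem_of_isClosed hS hgS (SMulMemClass.smul_mem _ hgS) hy, fun x => ?_⟩
  have hT := congrArg (· x) (geom_series_mul_neg y hy)
  simp only [BoundedContinuousFunction.coe_mul, BoundedContinuousFunction.coe_sub,
    BoundedContinuousFunction.coe_one, BoundedContinuousFunction.coe_smul, Pi.mul_apply,
    Pi.sub_apply, Pi.one_apply, smul_eq_mul, y] at hT ⊢
  linear_combination (∑' n, ((c' - c) • g) ^ n) x * hg x + hT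

theorem InvSubMem.of_continuousOn {S : NonUnitalSubalgebra ℂ (α →ᵇ ℂ)}
    (hS : IsClosed (S : Set (α →ᵇ ℂ))) {ι : α → ℂ} {β : Type*} [TopologicalSpace β] {s : Set β}
    (hs : IsPreconnected s) {γ : β → ℂ} (hγ : ContinuousOn γ s) {r : ℝ} (hr : 0 < r)
    (hγι : ∀ t ∈ s, ∀ x, r ≤ ‖ι x - γ t‖) {t₀ t₁ : β} (ht₀ : t₀ ∈ s) (ht₁ : t₁ ∈ s)
    (h : InvSubMem S ι (γ t₀)) : InvSubMem S ι (γ t₁) := by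
  refine hs.induction₂' (fun t t' => InvSubMem S ι (γ t) → InvSubMem S ι (γ t'))
    (fun t ht => ?_) (fun _ _ _ _ _ _ h₁ h₂ h => h₂ (h₁ h)) ht₀ ht₁ h
  filter_upwards [(hγ t ht).eventually (Metric.ball_mem_nhds _ hr), self_mem_nhdsWithin]
    with t' ht' ht's
  rw [dist_eq_norm] at ht'
  exact ⟨InvSubMem.of_norm_sub_lt hS hr (hγι t ht) ht',
    InvSubMem.of_norm_sub_lt hS hr (hγι t' ht's) (by rwa [norm_sub_rev])⟩

theorem exists_polynomial_of_mem_adjoin_singleton {u p : α →ᵇ ℂ}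
    (hp : p ∈ NonUnitalAlgebra.adjoin ℂ {u}) : ∃ Q : ℂ[X], ∀ x, p x = u x * Q.eval (u x) := by
  induction hp using NonUnitalAlgebra.adjoin_induction with
  | mem v hv =>
    rw [Set.mem_singleton_iff.1 hv]
    exact ⟨1, fun x => by simp⟩
  | zero => exact ⟨0, fun x => by simp⟩
  | add v w _ _ hv hw =>
    obtain ⟨Q, hQ⟩ := hv
    obtain ⟨R, hR⟩ := hw
    exact ⟨Q + R, fun x => by simp [hQ, hR, mul_add]⟩
  | mul v w _ _ hv hw =>
    obtain ⟨Q, hQ⟩ := hv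
    obtain ⟨R, hR⟩ := hw
    exact ⟨X * Q * R, fun x => by
      simp only [BoundedContinuousFunction.coe_mul, hQ, hR, Pi.mul_apply, eval_mul, eval_X]
      ring⟩
  | smul c v _ hv =>
    obtain ⟨Q, hQ⟩ := hv
    exact ⟨C c * Q, fun x => by
      simp only [BoundedContinuousFunction.coe_smul, hQ, smul_eq_mul, eval_mul, eval_C]
      ring⟩

end

theorem Polynomial.mul_eval_eq_sum_Icc {R : Type*} [CommSemiring R] (Q : R[X]) (v : R) :
    v * Q.eval v = ∑ j ∈ Icc 1 (Q.natDegree + 1), Q.coeff (j - 1) * v ^ j := by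
  rw [eval_eq_sum_range, mul_sum, ← Ico_add_one_right_eq_Icc, sum_Ico_eq_sum_range,
    Nat.add_sub_cancel]
  refine sum_congr rfl fun n _ => ?_
  rw [Nat.add_sub_cancel_left, pow_add]
  ring

theorem runge_pole_pushing_general
    (a b : ℂ)
    (γ : ℝ → ℂ) (hγ : ContinuousOn γ (Set.Icc 0 1))
    (hγ0 : γ 0 = b) (hγ1 : γ 1 = a)
    (δ : ℝ) (hδ : 0 < δ) (ε : ℝ) (hε : 0 < ε) :
    ∃ N : ℕ, 0 < N ∧ ∃ A : ℕ → ℂ,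
      ∀ z : ℂ, 2 * δ ≤ Metric.infDist z (γ '' Set.Icc 0 1) →
        ‖(z - b)⁻¹ - ∑ j ∈ Finset.Icc 1 N, A j / (z - a) ^ j‖ < ε := by
  set E := {z | 2 * δ ≤ Metric.infDist z (γ '' Set.Icc 0 1)}
  have hE : ∀ t ∈ Set.Icc (0 : ℝ) 1, ∀ z : E, 2 * δ ≤ ‖(z : ℂ) - γ t‖ := fun t ht z =>
    z.2.trans <| dist_eq_norm (z : ℂ) (γ t) ▸
      Metric.infDist_le_dist_of_mem (Set.mem_image_of_mem γ ht)
  have h2δ : 0 < 2 * δ := by positivity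
  have ht₁ : (1 : ℝ) ∈ Set.Icc (0 : ℝ) 1 := Set.right_mem_Icc.2 zero_le_one
  have ht₀ : (0 : ℝ) ∈ Set.Icc (0 : ℝ) 1 := Set.left_mem_Icc.2 zero_le_one
  obtain ⟨u, hu⟩ :=
    exists_boundedContinuous_mul_sub_eq_one continuous_subtype_val h2δ (hE 1 ht₁)
  set P := NonUnitalAlgebra.adjoin ℂ {u}
  obtain ⟨g, hgP, hg⟩ : InvSubMem P.topologicalClosure Subtype.val (γ 0) :=
    .of_continuousOn P.isClosed_topologicalClosure isPreconnected_Icc hγ h2δ hE ht₁ ht₀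
      ⟨u, P.le_topologicalClosure (NonUnitalAlgebra.self_mem_adjoin_singleton ℂ u), hu⟩
  obtain ⟨p, hp, hgp⟩ := Metric.mem_closure_iff.1 hgP ε hε
  obtain ⟨Q, hQ⟩ := exists_polynomial_of_mem_adjoin_singleton hp
  refine ⟨Q.natDegree + 1, Nat.succ_pos _, fun j => Q.coeff (j - 1), fun z hz => ?_⟩
  calc ‖(z - b)⁻¹ - ∑ j ∈ Icc 1 (Q.natDegree + 1), Q.coeff (j - 1) / (z - a) ^ j‖
      = dist (g ⟨z, hz⟩) (p ⟨z, hz⟩) := by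
        rw [dist_eq_norm, hQ, eq_inv_of_mul_eq_one_left (hg _), eq_inv_of_mul_eq_one_left (hu _),
          mul_eval_eq_sum_Icc, hγ0, hγ1]
        simp only [div_eq_mul_inv, inv_pow]
    _ ≤ dist g p := dist_coe_le_dist _
    _ < ε := hgp

/-- Runge's pole-pushing approximation: if `γ : [0,1] → ℂ` is a continuous curve
from `b` to `a` (with `a ≠ b`) and `δ > 0`, then for every `ε > 0` there are `N`
and constants `A_1, …, A_N` such that every `z` at distance at least `2δ` from the
image of `γ` satisfies `|1/(z−b) − Σ_{j=1}^N A_j/(z−a)^j| < ε`. -/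
theorem runge_pole_pushing
    (a b : ℂ) (hab : a ≠ b)
    (γ : ℝ → ℂ) (hγ : ContinuousOn γ (Set.Icc 0 1))
    (hγ0 : γ 0 = b) (hγ1 : γ 1 = a)
    (δ : ℝ) (hδ : 0 < δ) (ε : ℝ) (hε : 0 < ε) :
    ∃ N : ℕ, 0 < N ∧ ∃ A : ℕ → ℂ,
      ∀ z : ℂ, 2 * δ ≤ Metric.infDist z (γ '' Set.Icc 0 1) →
        ‖(z - b)⁻¹ - ∑ j ∈ Finset.Icc 1 N, A j / (z - a) ^ j‖ < ε :=
  runge_pole_pushing_general a b γ hγ hγ0 hγ1 δ hδ ε hε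
end

section
/- Let c ∈ ℂ, R > 0, and let a, b be points of the open disc D(c,R). Let A_1, …, A_N be complex numbers and ε > 0, and suppose that |1/(z−b) − Σ_{j=1}^N A_j/(z−a)^j| ≤ ε for every z on the circle |z − c| = R. Then for every function h holomorphic on an open set containing the closed disc cl(D(c,R)), |h(b) − Σ_{j=1}^N A_j h^{(j−1)}(a)/(j−1)!| ≤ ε · R · sup_{|z−c|=R} |h(z)|. (A uniform rational approximation on an enclosing contour yields an approximate one-point quadrature identity for holomorphic functions via the Cauchy integral formulas.) -/
/-!
Integrating `h` against the kernel `(z - b)⁻¹ - ∑ A j / (z - a) ^ j` over the circle gives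
`2πi (h b - ∑ A j h⁽ʲ⁻¹⁾(a) / (j - 1)!)` by the Cauchy integral formulas, and the standard
length-times-sup estimate bounds that integral by `2πR · ε · sup ‖h‖`. The Cauchy formula for
derivatives at a point `a` other than the centre is obtained by induction on the order: writing
`f z = f a + (z - a) • dslope f a z` lowers the order by one, the term `f a` integrating to zero.
-/

open Finset Metric Real Complex Function Nat

theorem AnalyticAt.iterate_dslope_apply_self {𝕜 E : Type*} [NontriviallyNormedField 𝕜]
    [CharZero 𝕜] [NormedAddCommGroup E] [NormedSpace 𝕜 E] [CompleteSpace E] {f : 𝕜 → E}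
    {a : 𝕜} (hf : AnalyticAt 𝕜 f a) (n : ℕ) :
    (swap dslope a)^[n] f a = (n ! : 𝕜)⁻¹ • iteratedDeriv n f a := by
  obtain ⟨p, hp⟩ := hf
  have hcoeff : (swap dslope a)^[n] f a = p.coeff n := by
    rw [← (hp.has_fpower_series_iterate_dslope_fslope n).coeff_zero (fun _ => 1)]
    simp [p.coeff_iterate_fslope n 0]
  obtain ⟨r, hr⟩ := hp
  rw [hcoeff, iteratedDeriv_eq_iteratedFDeriv, ← hr.factorial_smul, ← Nat.cast_smul_eq_nsmul 𝕜,
    inv_smul_smul₀ (Nat.cast_ne_zero.2 n.factorial_ne_zero)]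
  rfl

theorem IsCompact.le_biSup_of_continuousOn {X : Type*} [TopologicalSpace X] {s : Set X}
    {g : X → ℝ} (hs : IsCompact s) (hg : ContinuousOn g s) {x : X} (hx : x ∈ s) :
    g x ≤ ⨆ y ∈ s, g y :=
  le_ciSup₂ (f := fun y (_ : y ∈ s) => g y)
    ((hs.bddAbove_image hg).mono <| Set.iUnion_subset fun _ =>
      Set.range_subset_iff.2 fun hy => Set.mem_image_of_mem g hy) x hx

variable {E : Type*} [NormedAddCommGroup E] [NormedSpace ℂ E] {f : ℂ → E} {a c : ℂ} {R : ℝ}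

theorem ContinuousOn.circleIntegrable_inv_sub_pow_smul (hR : 0 ≤ R)
    (hf : ContinuousOn f (sphere c R)) (ha : a ∉ sphere c R) (n : ℕ) :
    CircleIntegrable (fun z => ((z - a) ^ n)⁻¹ • f z) c R := by
  refine ContinuousOn.circleIntegrable hR (ContinuousOn.smul ?_ hf)
  exact (continuousOn_id.sub continuousOn_const).pow n |>.inv₀ fun z hz =>
    pow_ne_zero n (sub_ne_zero.2 (by rintro rfl; exact ha hz))

variable [CompleteSpace E]

theorem DifferentiableOn.circleIntegral_inv_sub_pow_succ_smul_eq_iterate_dslope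
    (hf : DifferentiableOn ℂ f (closedBall c R)) (ha : a ∈ ball c R) (n : ℕ) :
    ∮ z in C(c, R), ((z - a) ^ (n + 1))⁻¹ • f z = (2 * π * I) • (swap dslope a)^[n] f a := by
  induction n generalizing f with
  | zero => simpa using hf.circleIntegral_sub_inv_smul ha
  | succ n ih =>
    have hR : 0 ≤ R := (pos_of_mem_ball ha).le
    have ha' : a ∉ sphere c R := sphere_disjoint_ball.notMem_of_mem_right ha
    have hdslope : DifferentiableOn ℂ (dslope f a) (closedBall c R) :=
      (differentiableOn_dslope (closedBall_mem_nhds_of_mem ha)).2 hf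
    have hsplit : Set.EqOn (fun z => ((z - a) ^ (n + 1 + 1))⁻¹ • f z)
        (fun z => ((z - a) ^ (n + 1))⁻¹ • dslope f a z + (z - a) ^ (-(n + 2) : ℤ) • f a)
        (sphere c R) := by
      intro z hz
      have hza : z ≠ a := by rintro rfl; exact ha' hz
      have hzpow : (z - a) ^ (-(n + 2) : ℤ) = ((z - a) ^ (n + 1 + 1))⁻¹ := by
        rw [zpow_neg]; norm_cast
      dsimp only
      rw [dslope_of_ne f hza, slope, vsub_eq_sub, smul_smul, ← mul_inv, ← pow_succ, smul_sub,
        hzpow, sub_add_cancel]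
    rw [circleIntegral.integral_congr hR hsplit, circleIntegral.integral_add
      ((hdslope.continuousOn.mono sphere_subset_closedBall).circleIntegrable_inv_sub_pow_smul
        hR ha' _)
      (CircleIntegrable.fun_smul_continuousOn
        (circleIntegrable_sub_zpow_iff.2 (.inr (.inr (by rwa [abs_of_nonneg hR]))))
        continuousOn_const),
      circleIntegral.integral_smul_const, circleIntegral.integral_sub_zpow_of_ne (by omega),
      zero_smul, add_zero, ih hdslope, iterate_succ_apply]

theorem DifferentiableOn.circleIntegral_inv_sub_pow_succ_smul
    (hf : DifferentiableOn ℂ f (closedBall c R)) (ha : a ∈ ball c R) (n : ℕ) :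
    ∮ z in C(c, R), ((z - a) ^ (n + 1))⁻¹ • f z = (2 * π * I / n !) • iteratedDeriv n f a := by
  rw [hf.circleIntegral_inv_sub_pow_succ_smul_eq_iterate_dslope ha,
    (hf.analyticAt (closedBall_mem_nhds_of_mem ha)).iterate_dslope_apply_self, smul_smul,
    div_eq_mul_inv]

theorem DifferentiableOn.circleIntegral_inv_sub_sub_sum_div_pow_mul {f : ℂ → ℂ} {b : ℂ}
    (hf : DifferentiableOn ℂ f (closedBall c R)) (ha : a ∈ ball c R) (hb : b ∈ ball c R)
    (N : ℕ) (A : ℕ → ℂ) :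
    ∮ z in C(c, R), ((z - b)⁻¹ - ∑ j ∈ Icc 1 N, A j / (z - a) ^ j) * f z
      = 2 * π * I * (f b - ∑ j ∈ Icc 1 N, A j * iteratedDeriv (j - 1) f a / (j - 1)!) := by
  have hR : 0 ≤ R := (pos_of_mem_ball ha).le
  have hcont : ContinuousOn f (sphere c R) := hf.continuousOn.mono sphere_subset_closedBall
  have hint : ∀ w ∈ ball c R, ∀ n, CircleIntegrable (fun z => ((z - w) ^ n)⁻¹ • f z) c R :=
    fun w hw => hcont.circleIntegrable_inv_sub_pow_smul hR
      (sphere_disjoint_ball.notMem_of_mem_right hw)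
  have hterm : ∀ j ∈ Icc 1 N, ∮ z in C(c, R), A j / (z - a) ^ j * f z
      = 2 * π * I * (A j * iteratedDeriv (j - 1) f a / (j - 1)!) := by
    intro j hj
    obtain ⟨k, rfl⟩ : ∃ k, j = k + 1 := Nat.exists_eq_add_of_le' (mem_Icc.1 hj).1
    calc ∮ z in C(c, R), A (k + 1) / (z - a) ^ (k + 1) * f z
        = A (k + 1) * ∮ z in C(c, R), ((z - a) ^ (k + 1))⁻¹ • f z := by
          rw [← circleIntegral.integral_const_mul]
          simp only [smul_eq_mul, div_eq_mul_inv, mul_assoc]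
      _ = _ := by
          rw [hf.circleIntegral_inv_sub_pow_succ_smul ha, smul_eq_mul, add_tsub_cancel_right]
          ring
  have hb_int := hint b hb 1
  have hcauchy := hf.circleIntegral_sub_inv_smul hb
  simp only [pow_one, smul_eq_mul] at hb_int hcauchy
  have hterm_int : ∀ j ∈ Icc 1 N, CircleIntegrable (fun z => A j / (z - a) ^ j * f z) c R :=
    fun j _ => by
      simpa [smul_eq_mul, div_eq_mul_inv, mul_assoc] using (hint a ha j).const_fun_smul (a := A j)
  simp only [sub_mul, sum_mul]
  rw [circleIntegral.integral_sub hb_int (.fun_sum _ hterm_int),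
    circleIntegral.integral_fun_sum hterm_int,
    sum_congr rfl hterm, ← mul_sum, hcauchy, mul_sub]

theorem contour_approximation_to_quadrature_general
    (c : ℂ) (R : ℝ)
    (a b : ℂ) (ha : a ∈ Metric.ball c R) (hb : b ∈ Metric.ball c R)
    (N : ℕ) (A : ℕ → ℂ) (ε : ℝ) (hε : 0 < ε)
    (happrox : ∀ z : ℂ, ‖z - c‖ = R →
      ‖(z - b)⁻¹ - ∑ j ∈ Finset.Icc 1 N, A j / (z - a) ^ j‖ ≤ ε) :
    ∀ (h : ℂ → ℂ) (U : Set ℂ), IsOpen U → Metric.closedBall c R ⊆ U →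
      DifferentiableOn ℂ h U →
      ‖h b - ∑ j ∈ Finset.Icc 1 N, A j * iteratedDeriv (j - 1) h a / ((j - 1).factorial : ℂ)‖
        ≤ ε * R * ⨆ z ∈ Metric.sphere c R, ‖h z‖ := by
  intro h U _ hUsub hdiff
  have hh : DifferentiableOn ℂ h (closedBall c R) := hdiff.mono hUsub
  have hM : ∀ z ∈ sphere c R, ‖h z‖ ≤ ⨆ z ∈ sphere c R, ‖h z‖ := fun z hz =>
    (isCompact_sphere c R).le_biSup_of_continuousOn
      (hh.continuousOn.mono sphere_subset_closedBall).norm hz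
  have hbound := circleIntegral.norm_integral_le_of_norm_le_const (pos_of_mem_ball ha).le
    fun z hz => (norm_mul_le _ _).trans <| mul_le_mul (happrox z (mem_sphere_iff_norm.1 hz))
      (hM z hz) (norm_nonneg _) hε.le
  rw [hh.circleIntegral_inv_sub_sub_sum_div_pow_mul ha hb, norm_mul] at hbound
  have h2pi : ‖(2 * π * I : ℂ)‖ = 2 * π := by simp [pi_pos.le]
  rw [h2pi] at hbound
  exact le_of_mul_le_mul_left (hbound.trans_eq (by ring)) two_pi_pos

/-- A uniform rational approximation on an enclosing circle yields an approximate
one-point quadrature identity: if `a, b ∈ D(c,R)` and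
`|1/(z−b) − Σ_{j=1}^N A_j/(z−a)^j| ≤ ε` on the circle `|z−c| = R`, then every `h`
holomorphic on a neighborhood of the closed disc satisfies
`|h(b) − Σ_{j=1}^N A_j h^{(j−1)}(a)/(j−1)!| ≤ ε R sup_{|z−c|=R} |h|`. -/
theorem contour_approximation_to_quadrature
    (c : ℂ) (R : ℝ) (hR : 0 < R)
    (a b : ℂ) (ha : a ∈ Metric.ball c R) (hb : b ∈ Metric.ball c R)
    (N : ℕ) (A : ℕ → ℂ) (ε : ℝ) (hε : 0 < ε)
    (happrox : ∀ z : ℂ, ‖z - c‖ = R →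
      ‖(z - b)⁻¹ - ∑ j ∈ Finset.Icc 1 N, A j / (z - a) ^ j‖ ≤ ε) :
    ∀ (h : ℂ → ℂ) (U : Set ℂ), IsOpen U → Metric.closedBall c R ⊆ U →
      DifferentiableOn ℂ h U →
      ‖h b - ∑ j ∈ Finset.Icc 1 N, A j * iteratedDeriv (j - 1) h a / ((j - 1).factorial : ℂ)‖
        ≤ ε * R * ⨆ z ∈ Metric.sphere c R, ‖h z‖ :=
  contour_approximation_to_quadrature_general c R a b ha hb N A ε hε happrox
end
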